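/- For all depths d ≤ D ≤ D' and all n⁻, n⁰, n⁺ ∈ ℕ^p, the bounding interval obtained by truncation at depth D' is contained in the one at depth D: k^{D'}_{d,0}(n⁻, n⁰, n⁺) ≥ k^D_{d,0}(n⁻, n⁰, n⁺) and k^{D'}_{d,1}(n⁻, n⁰, n⁺) ≤ k^D_{d,1}(n⁻, n⁰, n⁺). -/
import Mathlib


/-- Total weight `W(v) = Σ_{i : v_i ≠ 0} w_i` of the axes with at least one available split. -/
noncomputable def bartW (p : ℕ) (w : Fin p → ℝ) (v : Fin p → ℕ) : ℝ :=
  ∑ i ∈ Finset.univ.filter (fun i => v i ≠ 0), w i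


/-- The truncated BART sub-correlation function `k^D_{d,γ}`: same recursion as `k_d` for
`d < D`, with base cases `1` if `n = 0`, `1` at depth `D` if `n⁰ = 0`, and
`1 - (1-γ)·P_D` at depth `D` if `n⁰ ≠ 0`. -/
noncomputable def bartKT (p : ℕ) (w : Fin p → ℝ) (P : ℕ → ℝ) (D : ℕ) (γ : ℝ)
    (d : ℕ) (nm n0 np : Fin p → ℕ) : ℝ :=
  if ∀ i, nm i + n0 i + np i = 0 then 1
  else if D ≤ d then
    (if ∀ i, n0 i = 0 then 1 else 1 - (1 - γ) * P D)
  else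
    1 - P d * (1 - (1 / bartW p w (fun i => nm i + n0 i + np i)) *
      ∑ i ∈ Finset.univ.filter (fun i => nm i + n0 i + np i ≠ 0),
        (w i / ((nm i + n0 i + np i : ℕ) : ℝ)) *
          ((∑ k ∈ Finset.range (nm i),
              bartKT p w P D γ (d+1) (Function.update nm i k) n0 np) +
           (∑ k ∈ Finset.range (np i),
              bartKT p w P D γ (d+1) nm n0 (Function.update np i k))))
termination_by D - d
decreasing_by all_goals omega

lemma bartW_pos {p : ℕ} {w : Fin p → ℝ} (hw : ∀ i, 0 < w i) {v : Fin p → ℕ}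
    (h : ∃ i, v i ≠ 0) : 0 < bartW p w v := by
  obtain ⟨i, hi⟩ := h
  exact Finset.sum_pos (fun j _ => hw j)
    ⟨i, Finset.mem_filter.2 ⟨Finset.mem_univ i, hi⟩⟩

lemma bartKT_n0_zero (p : ℕ) (w : Fin p → ℝ) (hw : ∀ i, 0 < w i)
    (P : ℕ → ℝ) (D : ℕ) (γ : ℝ) :
    ∀ t d nm n0 np, (∀ i, n0 i = 0) → D - d = t →
      bartKT p w P D γ d nm n0 np = 1 := by
  intro t
  induction t with
  | zero =>
    intro d nm n0 np h0 ht
    rw [bartKT]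
    by_cases hn : ∀ i, nm i + n0 i + np i = 0
    · rw [if_pos hn]
    · rw [if_neg hn, if_pos (by omega : D ≤ d), if_pos h0]
  | succ t ih =>
    intro d nm n0 np h0 ht
    rw [bartKT]
    by_cases hn : ∀ i, nm i + n0 i + np i = 0
    · rw [if_pos hn]
    · rw [if_neg hn, if_neg (by omega : ¬ D ≤ d)]
      have hex : ∃ i, nm i + n0 i + np i ≠ 0 := by
        by_contra h; push_neg at h; exact hn fun i => h i
      have hWpos := bartW_pos hw hex
      have hS : (∑ i ∈ Finset.univ.filter (fun i => nm i + n0 i + np i ≠ 0),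
          (w i / ((nm i + n0 i + np i : ℕ) : ℝ)) *
            ((∑ k ∈ Finset.range (nm i),
                bartKT p w P D γ (d+1) (Function.update nm i k) n0 np) +
             (∑ k ∈ Finset.range (np i),
                bartKT p w P D γ (d+1) nm n0 (Function.update np i k))))
          = bartW p w (fun i => nm i + n0 i + np i) := by
        unfold bartW
        refine Finset.sum_congr rfl (fun i hi => ?_)
        have hni : nm i + n0 i + np i ≠ 0 := (Finset.mem_filter.1 hi).2
        rw [Finset.sum_congr rfl (fun k _ => ih (d+1) (Function.update nm i k) n0 np h0 (by omega)),
            Finset.sum_congr rfl (fun k _ => ih (d+1) nm n0 (Function.update np i k) h0 (by omega))]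
        simp only [Finset.sum_const, Finset.card_range, nsmul_eq_mul, mul_one]
        have hx : ((nm i + n0 i + np i : ℕ) : ℝ) ≠ 0 := Nat.cast_ne_zero.2 hni
        have hcast : ((nm i : ℝ) + (np i : ℝ)) = ((nm i + n0 i + np i : ℕ) : ℝ) := by
          push_cast [h0 i]; ring
        rw [hcast, div_mul_cancel₀ _ hx]
      rw [hS, one_div, inv_mul_cancel₀ hWpos.ne']
      ring

lemma bartKT_mem_Icc (p : ℕ) (w : Fin p → ℝ) (hw : ∀ i, 0 < w i)
    (P : ℕ → ℝ) (hP : ∀ d, P d ∈ Set.Icc (0 : ℝ) 1) (D : ℕ) (γ : ℝ)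
    (hγ : γ ∈ Set.Icc (0:ℝ) 1) :
    ∀ t d nm n0 np, D - d = t →
      bartKT p w P D γ d nm n0 np ∈ Set.Icc (0:ℝ) 1 := by
  intro t
  induction t with
  | zero =>
    intro d nm n0 np ht
    rw [bartKT]
    by_cases hn : ∀ i, nm i + n0 i + np i = 0
    · rw [if_pos hn]; exact ⟨zero_le_one, le_refl 1⟩
    · rw [if_neg hn, if_pos (by omega : D ≤ d)]
      by_cases h0 : ∀ i, n0 i = 0
      · rw [if_pos h0]; exact ⟨zero_le_one, le_refl 1⟩
      · rw [if_neg h0]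
        constructor <;> nlinarith [(hP D).1, (hP D).2, hγ.1, hγ.2]
  | succ t ih =>
    intro d nm n0 np ht
    rw [bartKT]
    by_cases hn : ∀ i, nm i + n0 i + np i = 0
    · rw [if_pos hn]; exact ⟨zero_le_one, le_refl 1⟩
    · rw [if_neg hn, if_neg (by omega : ¬ D ≤ d)]
      have hex : ∃ i, nm i + n0 i + np i ≠ 0 := by
        by_contra h; push_neg at h; exact hn fun i => h i
      have hWpos := bartW_pos hw hex
      set S := ∑ i ∈ Finset.univ.filter (fun i => nm i + n0 i + np i ≠ 0),
          (w i / ((nm i + n0 i + np i : ℕ) : ℝ)) *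
            ((∑ k ∈ Finset.range (nm i),
                bartKT p w P D γ (d+1) (Function.update nm i k) n0 np) +
             (∑ k ∈ Finset.range (np i),
                bartKT p w P D γ (d+1) nm n0 (Function.update np i k))) with hSdef
      have hS0 : 0 ≤ S := by
        refine Finset.sum_nonneg fun i hi => mul_nonneg
          (div_nonneg (hw i).le (Nat.cast_nonneg _)) (add_nonneg ?_ ?_)
        · exact Finset.sum_nonneg fun k _ => (ih (d+1) _ n0 _ (by omega)).1
        · exact Finset.sum_nonneg fun k _ => (ih (d+1) _ n0 _ (by omega)).1
      have hSW : S ≤ bartW p w (fun i => nm i + n0 i + np i) := by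
        unfold bartW
        refine Finset.sum_le_sum fun i hi => ?_
        have hni : nm i + n0 i + np i ≠ 0 := (Finset.mem_filter.1 hi).2
        have hx : (0:ℝ) < ((nm i + n0 i + np i : ℕ) : ℝ) :=
          Nat.cast_pos.2 (Nat.pos_of_ne_zero hni)
        have h1 : (∑ k ∈ Finset.range (nm i),
            bartKT p w P D γ (d+1) (Function.update nm i k) n0 np) ≤ nm i := by
          calc _ ≤ ∑ _k ∈ Finset.range (nm i), (1:ℝ) :=
                Finset.sum_le_sum fun k _ => (ih (d+1) _ n0 _ (by omega)).2
            _ = nm i := by simp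
        have h2 : (∑ k ∈ Finset.range (np i),
            bartKT p w P D γ (d+1) nm n0 (Function.update np i k)) ≤ np i := by
          calc _ ≤ ∑ _k ∈ Finset.range (np i), (1:ℝ) :=
                Finset.sum_le_sum fun k _ => (ih (d+1) _ n0 _ (by omega)).2
            _ = np i := by simp
        calc (w i / ((nm i + n0 i + np i : ℕ) : ℝ)) * _
            ≤ (w i / ((nm i + n0 i + np i : ℕ) : ℝ)) * ((nm i + n0 i + np i : ℕ) : ℝ) := by
              refine mul_le_mul_of_nonneg_left ?_ (div_nonneg (hw i).le hx.le)
              push_cast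
              have := h1; have := h2; linarith [h1, h2, (Nat.cast_nonneg (n0 i) : (0:ℝ) ≤ n0 i)]
          _ = w i := div_mul_cancel₀ _ hx.ne'
      have hc1 : 1 / bartW p w (fun i => nm i + n0 i + np i) * S ≤ 1 := by
        rw [one_div_mul_eq_div]
        exact (div_le_one hWpos).2 hSW
      have hc0 : 0 ≤ 1 / bartW p w (fun i => nm i + n0 i + np i) * S :=
        mul_nonneg (by positivity) hS0
      constructor <;> nlinarith [(hP d).1, (hP d).2]

lemma bartKT_ge_one_sub_P (p : ℕ) (w : Fin p → ℝ) (hw : ∀ i, 0 < w i)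
    (P : ℕ → ℝ) (hP : ∀ d, P d ∈ Set.Icc (0 : ℝ) 1) (D : ℕ) (γ : ℝ)
    (hγ : γ ∈ Set.Icc (0:ℝ) 1) (d : ℕ) (hdD : d ≤ D) (nm n0 np : Fin p → ℕ) :
    1 - P d ≤ bartKT p w P D γ d nm n0 np := by
  rw [bartKT]
  by_cases hn : ∀ i, nm i + n0 i + np i = 0
  · rw [if_pos hn]; linarith [(hP d).1]
  by_cases hDd : D ≤ d
  · rw [if_neg hn, if_pos hDd]
    have hdD' : d = D := le_antisymm hdD hDd
    by_cases h0 : ∀ i, n0 i = 0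
    · rw [if_pos h0]; linarith [(hP d).1]
    · rw [if_neg h0]
      have hPe : P D = P d := by rw [hdD']
      rw [hPe]
      nlinarith [(hP d).1, hγ.1, hγ.2]
  · rw [if_neg hn, if_neg hDd]
    have hex : ∃ i, nm i + n0 i + np i ≠ 0 := by
      by_contra h; push_neg at h; exact hn fun i => h i
    have hWpos := bartW_pos hw hex
    have hS0 : 0 ≤ ∑ i ∈ Finset.univ.filter (fun i => nm i + n0 i + np i ≠ 0),
        (w i / ((nm i + n0 i + np i : ℕ) : ℝ)) *
          ((∑ k ∈ Finset.range (nm i),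
              bartKT p w P D γ (d+1) (Function.update nm i k) n0 np) +
           (∑ k ∈ Finset.range (np i),
              bartKT p w P D γ (d+1) nm n0 (Function.update np i k))) := by
      refine Finset.sum_nonneg fun i hi => mul_nonneg
        (div_nonneg (hw i).le (Nat.cast_nonneg _)) (add_nonneg ?_ ?_)
      · exact Finset.sum_nonneg fun k _ =>
          (bartKT_mem_Icc p w hw P hP D γ hγ (D - (d+1)) (d+1) _ n0 _ rfl).1
      · exact Finset.sum_nonneg fun k _ =>
          (bartKT_mem_Icc p w hw P hP D γ hγ (D - (d+1)) (d+1) _ n0 _ rfl).1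
    have hc : 0 ≤ 1 / bartW p w (fun i => nm i + n0 i + np i) := by positivity
    nlinarith [(hP d).1, mul_nonneg hc hS0, mul_nonneg (hP d).1 (mul_nonneg hc hS0)]

/-- Theorem 4: for `d ≤ D ≤ D'`, the bounding interval by truncation at depth `D'` is
contained in the one at depth `D`: `k^{D'}_{d,0} ≥ k^D_{d,0}` and `k^{D'}_{d,1} ≤ k^D_{d,1}`. -/
theorem bartKT_intervals_nested
    (p : ℕ) (hp : 1 ≤ p) (w : Fin p → ℝ) (hw : ∀ i, 0 < w i)
    (P : ℕ → ℝ) (hP : ∀ d, P d ∈ Set.Icc (0 : ℝ) 1)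
    (D D' d : ℕ) (hdD : d ≤ D) (hDD' : D ≤ D') (nm n0 np : Fin p → ℕ) :
    bartKT p w P D 0 d nm n0 np ≤ bartKT p w P D' 0 d nm n0 np ∧
    bartKT p w P D' 1 d nm n0 np ≤ bartKT p w P D 1 d nm n0 np := by
  have hγ0 : (0:ℝ) ∈ Set.Icc (0:ℝ) 1 := ⟨le_refl 0, zero_le_one⟩
  have hγ1 : (1:ℝ) ∈ Set.Icc (0:ℝ) 1 := ⟨zero_le_one, le_refl 1⟩
  have key : ∀ t d nm np, d ≤ D → D - d = t →
      bartKT p w P D 0 d nm n0 np ≤ bartKT p w P D' 0 d nm n0 np ∧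
      bartKT p w P D' 1 d nm n0 np ≤ bartKT p w P D 1 d nm n0 np := by
    intro t
    induction t with
    | zero =>
      intro d nm np hle ht
      have hd : d = D := by omega
      by_cases hn : ∀ i, nm i + n0 i + np i = 0
      · constructor <;> (rw [bartKT, bartKT, if_pos hn, if_pos hn])
      by_cases h0 : ∀ i, n0 i = 0
      · constructor <;>
          (rw [bartKT_n0_zero p w hw P D _ (D - d) d nm n0 np h0 rfl,
               bartKT_n0_zero p w hw P D' _ (D' - d) d nm n0 np h0 rfl])
      have hPd : P D = P d := by rw [hd]
      constructor
      · conv_lhs => rw [bartKT]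
        rw [if_neg hn, if_pos (by omega : D ≤ d), if_neg h0]
        have h := bartKT_ge_one_sub_P p w hw P hP D' 0 hγ0 d (by omega) nm n0 np
        rw [hPd]
        linarith
      · conv_rhs => rw [bartKT]
        rw [if_neg hn, if_pos (by omega : D ≤ d), if_neg h0]
        have h := (bartKT_mem_Icc p w hw P hP D' 1 hγ1 (D' - d) d nm n0 np rfl).2
        linarith
    | succ t ih =>
      intro d nm np hle ht
      have hdD : ¬ D ≤ d := by omega
      have hdD' : ¬ D' ≤ d := by omega
      by_cases hn : ∀ i, nm i + n0 i + np i = 0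
      · constructor <;> (rw [bartKT, bartKT, if_pos hn, if_pos hn])
      have hex : ∃ i, nm i + n0 i + np i ≠ 0 := by
        by_contra h; push_neg at h; exact hn fun i => h i
      have hWpos := bartW_pos hw hex
      have hc : 0 ≤ 1 / bartW p w (fun i => nm i + n0 i + np i) := by positivity
      constructor
      · rw [bartKT, bartKT, if_neg hn, if_neg hn, if_neg hdD, if_neg hdD']
        have hmono : (∑ i ∈ Finset.univ.filter (fun i => nm i + n0 i + np i ≠ 0),
            (w i / ((nm i + n0 i + np i : ℕ) : ℝ)) *
              ((∑ k ∈ Finset.range (nm i),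
                  bartKT p w P D 0 (d+1) (Function.update nm i k) n0 np) +
               (∑ k ∈ Finset.range (np i),
                  bartKT p w P D 0 (d+1) nm n0 (Function.update np i k)))) ≤
            (∑ i ∈ Finset.univ.filter (fun i => nm i + n0 i + np i ≠ 0),
            (w i / ((nm i + n0 i + np i : ℕ) : ℝ)) *
              ((∑ k ∈ Finset.range (nm i),
                  bartKT p w P D' 0 (d+1) (Function.update nm i k) n0 np) +
               (∑ k ∈ Finset.range (np i),
                  bartKT p w P D' 0 (d+1) nm n0 (Function.update np i k)))) := by
          refine Finset.sum_le_sum fun i hi => mul_le_mul_of_nonneg_left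
            (add_le_add (Finset.sum_le_sum fun k _ => ?_) (Finset.sum_le_sum fun k _ => ?_))
            (div_nonneg (hw i).le (Nat.cast_nonneg _))
          · exact (ih (d+1) _ _ (by omega) (by omega)).1
          · exact (ih (d+1) _ _ (by omega) (by omega)).1
        have h := mul_le_mul_of_nonneg_left hmono hc
        have h2 := mul_le_mul_of_nonneg_left (sub_le_sub_left h (1:ℝ)) (hP d).1
        linarith
      · rw [bartKT, bartKT, if_neg hn, if_neg hn, if_neg hdD, if_neg hdD']
        have hmono : (∑ i ∈ Finset.univ.filter (fun i => nm i + n0 i + np i ≠ 0),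
            (w i / ((nm i + n0 i + np i : ℕ) : ℝ)) *
              ((∑ k ∈ Finset.range (nm i),
                  bartKT p w P D' 1 (d+1) (Function.update nm i k) n0 np) +
               (∑ k ∈ Finset.range (np i),
                  bartKT p w P D' 1 (d+1) nm n0 (Function.update np i k)))) ≤
            (∑ i ∈ Finset.univ.filter (fun i => nm i + n0 i + np i ≠ 0),
            (w i / ((nm i + n0 i + np i : ℕ) : ℝ)) *
              ((∑ k ∈ Finset.range (nm i),
                  bartKT p w P D 1 (d+1) (Function.update nm i k) n0 np) +
               (∑ k ∈ Finset.range (np i),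
                  bartKT p w P D 1 (d+1) nm n0 (Function.update np i k)))) := by
          refine Finset.sum_le_sum fun i hi => mul_le_mul_of_nonneg_left
            (add_le_add (Finset.sum_le_sum fun k _ => ?_) (Finset.sum_le_sum fun k _ => ?_))
            (div_nonneg (hw i).le (Nat.cast_nonneg _))
          · exact (ih (d+1) _ _ (by omega) (by omega)).2
          · exact (ih (d+1) _ _ (by omega) (by omega)).2
        have h := mul_le_mul_of_nonneg_left hmono hc
        have h2 := mul_le_mul_of_nonneg_left (sub_le_sub_left h (1:ℝ)) (hP d).1
        linarith
  exact key (D - d) d nm np hdD rfl
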